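/- arXiv:1509.03532 — 2 statements merged into one kernel-verified Lean document; each statement's English description precedes it below -/
import Mathlib

section
/- Let r : C1 → C2 be an F-linear exact (triangulated) functor between F-linear triangulated categories equipped with weight structures. Assume (1) r is weight exact, and (2) the induced functor r_{w=0} : C_{1,w=0} → C_{2,w=0} on hearts is full. Then for every integer n and all objects X ∈ C_{1,w≤n} and Z ∈ C_{1,w≥n}, the map r : Hom_{C1}(X, Z) → Hom_{C2}(r(X), r(Z)) is surjective. -/
open CategoryTheory CategoryTheory.Limits CategoryTheory.Pretriangulated

namespace Paper

/-- A morphism `f : X ⟶ Y` belongs to the radical of a preadditive category if,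
for every `g : Y ⟶ X`, the endomorphism `𝟙 X - g ∘ f` is invertible. -/
def InRadical {C : Type*} [Category C] [Preadditive C] {X Y : C} (f : X ⟶ Y) : Prop :=
  ∀ g : Y ⟶ X, IsIso (𝟙 X - f ≫ g)

/-- The Jacobson radical of a (possibly noncommutative) ring, as a two-sided ideal. -/
def ringRadical (R : Type*) [Ring R] : TwoSidedIdeal R :=
  TwoSidedIdeal.jacobson ⊥

/-- A ring is semi-primary if its (Jacobson) radical is nilpotent and the quotient by
the radical is a semisimple ring. -/
def IsSemiprimaryRing (R : Type*) [Ring R] : Prop :=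
  IsSemisimpleRing (ringRadical R).ringCon.Quotient ∧
    ∃ n : ℕ, ∀ f : Fin n → R, (∀ i, f i ∈ ringRadical R) → (List.ofFn f).prod = 0

/-- A class of objects of a preadditive category is semi-primary (André–Kahn) if the
endomorphism ring of each of its objects is a semi-primary ring; for an object `X`,
the radical ideal `rad(X,X)` is exactly the Jacobson radical of `End X`. -/
def SemiprimaryOn {C : Type*} [Category C] [Preadditive C] (P : Set C) : Prop :=
  ∀ X : C, X ∈ P → IsSemiprimaryRing (CategoryTheory.End X)

/-- A class of objects is pseudo-Abelian (idempotent complete) if every idempotent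
endomorphism of one of its objects splits through an object of the class. -/
def PseudoAbelianOn {C : Type*} [Category C] [Preadditive C] (P : Set C) : Prop :=
  ∀ X : C, X ∈ P → ∀ e : X ⟶ X, e ≫ e = e →
    ∃ (Y : C) (_ : Y ∈ P) (p : X ⟶ Y) (i : Y ⟶ X), p ≫ i = e ∧ i ≫ p = 𝟙 Y

variable (C : Type*) [Category C] [Preadditive C] [HasZeroObject C] [HasShift C ℤ]
  [∀ n : ℤ, (CategoryTheory.shiftFunctor C n).Additive] [Pretriangulated C]

/-- A weight structure on a pretriangulated category: classes `le = C_{w≤0}` and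
`ge = C_{w≥0}`, additive (containing zero objects, closed under finite direct sums)
and closed under retracts, with `C_{w≤0} ⊆ C_{w≤1}`, `C_{w≥1} ⊆ C_{w≥0}`,
orthogonality, and existence of weight decompositions. -/
structure WeightStructure where
  le : Set C
  ge : Set C
  le_retract : ∀ {X Y : C} (i : X ⟶ Y) (p : Y ⟶ X), i ≫ p = 𝟙 X → Y ∈ le → X ∈ le
  ge_retract : ∀ {X Y : C} (i : X ⟶ Y) (p : Y ⟶ X), i ≫ p = 𝟙 X → Y ∈ ge → X ∈ ge
  le_zero : ∀ X : C, IsZero X → X ∈ le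
  ge_zero : ∀ X : C, IsZero X → X ∈ ge
  le_add : ∀ {X Y : C} (b : BinaryBicone X Y), b.IsBilimit → X ∈ le → Y ∈ le → b.pt ∈ le
  ge_add : ∀ {X Y : C} (b : BinaryBicone X Y), b.IsBilimit → X ∈ ge → Y ∈ ge → b.pt ∈ ge
  le_shift : ∀ X : C, X ∈ le → X⟦(-1 : ℤ)⟧ ∈ le
  ge_shift : ∀ X : C, X ∈ ge → X⟦(1 : ℤ)⟧ ∈ ge
  orthogonal : ∀ {X Y : C}, X ∈ le → Y⟦(-1 : ℤ)⟧ ∈ ge → ∀ f : X ⟶ Y, f = 0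
  exists_decomp : ∀ M : C, ∃ (A B : C) (f : A ⟶ M) (g : M ⟶ B) (h : B ⟶ A⟦(1 : ℤ)⟧),
    (Triangle.mk f g h ∈ distTriang C) ∧ A ∈ le ∧ B⟦(-1 : ℤ)⟧ ∈ ge

namespace WeightStructure

variable {C} (w : WeightStructure C)

/-- `C_{w ≤ n} := C_{w ≤ 0}[n]`. -/
def leN (n : ℤ) : Set C := {X : C | X⟦-n⟧ ∈ w.le}

/-- `C_{w ≥ n} := C_{w ≥ 0}[n]`. -/
def geN (n : ℤ) : Set C := {X : C | X⟦-n⟧ ∈ w.ge}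

/-- The heart `C_{w = 0} = C_{w ≤ 0} ∩ C_{w ≥ 0}`. -/
def heart : Set C := w.leN 0 ∩ w.geN 0

/-- The weight structure is bounded if every object lies in
`C_{w ≥ m} ∩ C_{w ≤ n}` for some integers `m ≤ n`. -/
def Bounded : Prop := ∀ M : C, ∃ m n : ℤ, m ≤ n ∧ M ∈ w.geN m ∧ M ∈ w.leN n

end WeightStructure

/-- A weight filtration of `M` concentrated at `n`: an exact triangle
`M_{≤ n-1} ⟶ M ⟶ M_{≥ n} ⟶(δ) M_{≤ n-1}[1]` with the two outer terms in
`C_{w ≤ n-1}` and `C_{w ≥ n}` respectively. -/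
def IsWeightFiltrationAt {C : Type*} [Category C] [Preadditive C] [HasZeroObject C]
    [HasShift C ℤ] [∀ n : ℤ, (CategoryTheory.shiftFunctor C n).Additive] [Pretriangulated C]
    (w : WeightStructure C) (n : ℤ) {A M B : C}
    (f : A ⟶ M) (g : M ⟶ B) (δ : B ⟶ A⟦(1 : ℤ)⟧) : Prop :=
  (Triangle.mk f g δ ∈ distTriang C) ∧ A ∈ w.leN (n - 1) ∧ B ∈ w.geN n

/-- A minimal weight filtration concentrated at `n`: a weight filtration concentrated
at `n` whose connecting morphism lies in the radical. -/
def IsMinimalWeightFiltrationAt {C : Type*} [Category C] [Preadditive C] [HasZeroObject C]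
    [HasShift C ℤ] [∀ n : ℤ, (CategoryTheory.shiftFunctor C n).Additive] [Pretriangulated C]
    (w : WeightStructure C) (n : ℤ) {A M B : C}
    (f : A ⟶ M) (g : M ⟶ B) (δ : B ⟶ A⟦(1 : ℤ)⟧) : Prop :=
  IsWeightFiltrationAt w n f g δ ∧ InRadical δ

/-- `M` is without weights `α, α+1, …, β` if it admits a weight filtration avoiding
these weights. -/
def WithoutWeights {C : Type*} [Category C] [Preadditive C] [HasZeroObject C]
    [HasShift C ℤ] [∀ n : ℤ, (CategoryTheory.shiftFunctor C n).Additive] [Pretriangulated C]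
    (w : WeightStructure C) (α β : ℤ) (M : C) : Prop :=
  ∃ (A B : C) (f : A ⟶ M) (g : M ⟶ B) (δ : B ⟶ A⟦(1 : ℤ)⟧),
    (Triangle.mk f g δ ∈ distTriang C) ∧ A ∈ w.leN (α - 1) ∧ B ∈ w.geN (β + 1)

/-- A functor is weight exact if it respects both classes of the weight structures. -/
def WeightExact {C₁ : Type*} [Category C₁] [Preadditive C₁] [HasZeroObject C₁] [HasShift C₁ ℤ]
    [∀ n : ℤ, (CategoryTheory.shiftFunctor C₁ n).Additive] [Pretriangulated C₁]
    {C₂ : Type*} [Category C₂] [Preadditive C₂] [HasZeroObject C₂] [HasShift C₂ ℤ]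
    [∀ n : ℤ, (CategoryTheory.shiftFunctor C₂ n).Additive] [Pretriangulated C₂]
    (w₁ : WeightStructure C₁) (w₂ : WeightStructure C₂) (r : C₁ ⥤ C₂) : Prop :=
  (∀ X : C₁, X ∈ w₁.le → r.obj X ∈ w₂.le) ∧ (∀ X : C₁, X ∈ w₁.ge → r.obj X ∈ w₂.ge)

/-! Shifting by `-n` reduces to `n = 0`. Take weight decompositions `A → X → B` with
`A ∈ C_{w≤-1}` and `Z₀ → Z → Z₁` with `Z₁ ∈ C_{w≥1}`; by extension closure of the two halves,
`B` and `Z₀` lie in the heart. Since `r` is weight exact, orthogonality kills `r(A) → r(Z)` and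
`r(B) → r(Z₁)`, so `β` factors as `r(X) → r(B) → r(Z₀) → r(Z)`, and the middle map lifts by
fullness of `r` on hearts. -/

section

variable {C : Type*} [Category C] [Preadditive C] [HasZeroObject C] [HasShift C ℤ]
  [∀ n : ℤ, (CategoryTheory.shiftFunctor C n).Additive] [Pretriangulated C]

lemma distinguished_replace_obj₂ {T : Triangle C} (hT : T ∈ distTriang C) {M : C}
    (e : T.obj₂ ≅ M) : Triangle.mk (T.mor₁ ≫ e.hom) (e.inv ≫ T.mor₂) T.mor₃ ∈ distTriang C :=
  isomorphic_distinguished _ hT _ (Triangle.isoMk _ _ (Iso.refl _) e.symm (Iso.refl _)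
    (by simp [Triangle.mk]) (by simp [Triangle.mk]) (by simp [Triangle.mk]))

namespace WeightStructure

variable (w : WeightStructure C)

lemma le_of_iso {X Y : C} (e : X ≅ Y) (hY : Y ∈ w.le) : X ∈ w.le :=
  w.le_retract e.hom e.inv e.hom_inv_id hY

lemma ge_of_iso {X Y : C} (e : X ≅ Y) (hY : Y ∈ w.ge) : X ∈ w.ge :=
  w.ge_retract e.hom e.inv e.hom_inv_id hY

lemma mem_heart {X : C} (hle : X ∈ w.le) (hge : X ∈ w.ge) : X ∈ w.heart :=
  have e : X⟦-(0 : ℤ)⟧ ≅ X := (shiftFunctorZero' C (-(0 : ℤ)) neg_zero).app X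
  ⟨w.le_of_iso e hle, w.ge_of_iso e hge⟩

lemma eq_zero_of_shift_one_mem_le {X Y : C} (hX : X⟦(1 : ℤ)⟧ ∈ w.le) (hY : Y ∈ w.ge)
    (f : X ⟶ Y) : f = 0 := by
  have hY' : Y⟦(1 : ℤ)⟧⟦(-1 : ℤ)⟧ ∈ w.ge :=
    w.ge_of_iso ((shiftFunctorCompIsoId C (1 : ℤ) (-1) (by omega)).app Y) hY
  apply (shiftFunctor C (1 : ℤ)).map_injective
  rw [w.orthogonal hX hY' (f⟦(1 : ℤ)⟧'), Functor.map_zero]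

lemma exists_distinguished_shift_one_mem_le_mem_ge (M : C) :
    ∃ (A B : C) (f : A ⟶ M) (g : M ⟶ B) (h : B ⟶ A⟦(1 : ℤ)⟧),
      Triangle.mk f g h ∈ distTriang C ∧ A⟦(1 : ℤ)⟧ ∈ w.le ∧ B ∈ w.ge := by
  obtain ⟨A, B, f, g, h, hT, hA, hB⟩ := w.exists_decomp (M⟦(1 : ℤ)⟧)
  exact ⟨_, _, _, _, _, distinguished_replace_obj₂ (Triangle.shift_distinguished _ hT (-1))
      ((shiftFunctorCompIsoId C (1 : ℤ) (-1) (by omega)).app M),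
    w.le_of_iso ((shiftFunctorCompIsoId C (-1 : ℤ) 1 (by omega)).app A) hA, hB⟩

lemma mem_le_of_distinguished {T : Triangle C} (hT : T ∈ distTriang C) (h₁ : T.obj₁ ∈ w.le)
    (h₃ : T.obj₃ ∈ w.le) : T.obj₂ ∈ w.le := by
  obtain ⟨A, B, a, b, d, hAB, hA, hB⟩ := w.exists_decomp T.obj₂
  obtain ⟨c, rfl⟩ := Triangle.yoneda_exact₂ T hT b (w.orthogonal h₁ hB _)
  obtain ⟨p, hp⟩ := Triangle.coyoneda_exact₂ _ hAB (𝟙 T.obj₂)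
    ((Category.id_comp _).trans (by rw [w.orthogonal h₃ hB c, comp_zero]; rfl))
  exact w.le_retract p a hp.symm hA

lemma mem_ge_of_distinguished {T : Triangle C} (hT : T ∈ distTriang C) (h₁ : T.obj₁ ∈ w.ge)
    (h₃ : T.obj₃ ∈ w.ge) : T.obj₂ ∈ w.ge := by
  obtain ⟨A, B, a, b, d, hAB, hA, hB⟩ := w.exists_distinguished_shift_one_mem_le_mem_ge T.obj₂
  obtain ⟨c, rfl⟩ := Triangle.coyoneda_exact₂ T hT a (w.eq_zero_of_shift_one_mem_le hA h₃ _)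
  obtain ⟨s, hs⟩ := Triangle.yoneda_exact₂ _ hAB (𝟙 T.obj₂)
    ((Category.comp_id _).trans (by rw [w.eq_zero_of_shift_one_mem_le hA h₁ c, zero_comp]; rfl))
  exact w.ge_retract b s hs.symm hB

end WeightStructure

end

lemma _root_.CategoryTheory.Functor.map_surjective_of_map_shift_surjective {C D A : Type*}
    [Category C] [Category D] [AddGroup A] [HasShift C A] [HasShift D A]
    (r : C ⥤ D) [r.CommShift A] (a : A) {X Y : C}
    (h : Function.Surjective (r.map : (X⟦a⟧ ⟶ Y⟦a⟧) → _)) :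
    Function.Surjective (r.map : (X ⟶ Y) → _) := by
  intro β
  obtain ⟨f, hf⟩ := h ((r.commShiftIso a).hom.app X ≫ β⟦a⟧' ≫ (r.commShiftIso a).inv.app Y)
  refine ⟨(shiftFunctor C a).preimage f, (shiftFunctor D a).map_injective ?_⟩
  rw [← cancel_epi ((r.commShiftIso a).hom.app X), ← r.commShiftIso_hom_naturality,
    Functor.map_preimage, hf]
  simp

lemma WeightExact.map_surjective_of_mem_le_of_mem_ge
    {C₁ : Type*} [Category C₁] [Preadditive C₁] [HasZeroObject C₁] [HasShift C₁ ℤ]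
    [∀ n : ℤ, (CategoryTheory.shiftFunctor C₁ n).Additive] [Pretriangulated C₁]
    {C₂ : Type*} [Category C₂] [Preadditive C₂] [HasZeroObject C₂] [HasShift C₂ ℤ]
    [∀ n : ℤ, (CategoryTheory.shiftFunctor C₂ n).Additive] [Pretriangulated C₂]
    {w₁ : WeightStructure C₁} {w₂ : WeightStructure C₂}
    {r : C₁ ⥤ C₂} [r.Additive] [r.CommShift ℤ] [r.IsTriangulated]
    (hwe : WeightExact w₁ w₂ r)
    (hfull : ∀ X Y : C₁, X ∈ w₁.heart → Y ∈ w₁.heart →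
      ∀ g : r.obj X ⟶ r.obj Y, ∃ f : X ⟶ Y, r.map f = g)
    {X Z : C₁} (hX : X ∈ w₁.le) (hZ : Z ∈ w₁.ge) :
    Function.Surjective (r.map : (X ⟶ Z) → _) := by
  intro β
  obtain ⟨A, B, a, b, d, hAB, hA, hBge⟩ := w₁.exists_distinguished_shift_one_mem_le_mem_ge X
  have hBle : B ∈ w₁.le := w₁.mem_le_of_distinguished (rot_of_distTriang _ hAB) hX hA
  obtain ⟨Z₀, Z₁, i, p, d', hZ₀Z₁, hZ₀le, hZ₁⟩ := w₁.exists_decomp Z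
  have hZ₀ge : Z₀ ∈ w₁.ge := w₁.mem_ge_of_distinguished (inv_rot_of_distTriang _ hZ₀Z₁) hZ₁ hZ
  have hrA : (r.obj A)⟦(1 : ℤ)⟧ ∈ w₂.le :=
    w₂.le_of_iso ((r.commShiftIso (1 : ℤ)).app A).symm (hwe.1 _ hA)
  obtain ⟨γ, rfl⟩ := Triangle.yoneda_exact₂ _ (r.map_distinguished _ hAB) β
    (w₂.eq_zero_of_shift_one_mem_le hrA (hwe.2 Z hZ) _)
  have hrZ₁ : (r.obj Z₁)⟦(-1 : ℤ)⟧ ∈ w₂.ge :=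
    w₂.ge_of_iso ((r.commShiftIso (-1 : ℤ)).app Z₁).symm (hwe.2 _ hZ₁)
  obtain ⟨δ, rfl⟩ := Triangle.coyoneda_exact₂ _ (r.map_distinguished _ hZ₀Z₁) γ
    (w₂.orthogonal (hwe.1 B hBle) hrZ₁ _)
  obtain ⟨f, rfl⟩ := hfull B Z₀ (w₁.mem_heart hBle hBge) (w₁.mem_heart hZ₀le hZ₀ge) δ
  exact ⟨b ≫ f ≫ i, by simp only [Functor.map_comp]; rfl⟩

theorem statement0
    (F : Type*) [Field F] [CharZero F]
    {C₁ : Type*} [Category C₁] [Preadditive C₁] [HasZeroObject C₁] [HasShift C₁ ℤ]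
    [∀ n : ℤ, (CategoryTheory.shiftFunctor C₁ n).Additive] [Pretriangulated C₁] [CategoryTheory.Linear F C₁]
    {C₂ : Type*} [Category C₂] [Preadditive C₂] [HasZeroObject C₂] [HasShift C₂ ℤ]
    [∀ n : ℤ, (CategoryTheory.shiftFunctor C₂ n).Additive] [Pretriangulated C₂] [CategoryTheory.Linear F C₂]
    (w₁ : WeightStructure C₁) (w₂ : WeightStructure C₂)
    (r : C₁ ⥤ C₂) [r.Additive] [Functor.Linear F r] [r.CommShift ℤ] [r.IsTriangulated]
    (hwe : WeightExact w₁ w₂ r)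
    (hfull : ∀ X Y : C₁, X ∈ w₁.heart → Y ∈ w₁.heart →
      ∀ g : r.obj X ⟶ r.obj Y, ∃ f : X ⟶ Y, r.map f = g)
    (n : ℤ) (X Z : C₁) (hX : X ∈ w₁.leN n) (hZ : Z ∈ w₁.geN n)
    (β : r.obj X ⟶ r.obj Z) :
    ∃ f : X ⟶ Z, r.map f = β :=
  r.map_surjective_of_map_shift_surjective (-n)
    (hwe.map_surjective_of_mem_le_of_mem_ge hfull hX hZ) β

end Paper
end

section
/- Let r : C1 → C2 be an F-linear exact (triangulated) functor between F-linear triangulated categories equipped with weight structures. Assume (1) r is weight exact, and (2) the induced functor r_{w=0} : C_{1,w=0} → C_{2,w=0} on hearts is full. Then r maps minimal weight filtrations to minimal weight filtrations: if M_{≤n-1} → M → M_{≥n} →(δ) M_{≤n-1}[1] is a minimal weight filtration of M ∈ C1 concentrated at n ∈ ℤ, then its image under r is a minimal weight filtration of r(M) concentrated at n. -/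
open CategoryTheory CategoryTheory.Limits CategoryTheory.Pretriangulated

namespace Paper

variable (C : Type*) [Category C] [Preadditive C] [HasZeroObject C] [HasShift C ℤ]
  [∀ n : ℤ, (CategoryTheory.shiftFunctor C n).Additive] [Pretriangulated C]

/-!
A morphism `r X ⟶ r Y` with `X` of weights `≤ n` and `Y` of weights `≥ n` factors, by
orthogonality, through the images of the weight-`n` pieces `X ⟶ X₀` and `Y₀ ⟶ Y`. These pieces
lie in a shift of the heart, where `r` is full, so `r` is full on `Hom(C_{w≤n}, C_{w≥n})`. The
maps tested against `r(δ)` in the definition of the radical are maps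
`r(M_{≤n-1}[1]) ⟶ r(M_{≥n})`, so each is some `r(v)`, and `1 - r(δ) ≫ r(v) = r(1 - δ ≫ v)` is
invertible because `δ` is radical.
-/

def FullOn {C₁ C₂ : Type*} [Category C₁] [Category C₂] (r : C₁ ⥤ C₂) (P Q : Set C₁) : Prop :=
  ∀ X Y : C₁, X ∈ P → Y ∈ Q → ∀ g : r.obj X ⟶ r.obj Y, ∃ f : X ⟶ Y, r.map f = g

section Radical

variable {C₁ C₂ : Type*} [Category C₁] [Preadditive C₁] [Category C₂] [Preadditive C₂]

lemma InRadical.comp_isIso {X Y Z : C₁} {δ : X ⟶ Y} (hδ : InRadical δ) (e : Y ⟶ Z) [IsIso e] :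
    InRadical (δ ≫ e) := fun u => by
  simpa only [Category.assoc] using hδ (e ≫ u)

lemma InRadical.map {X Y : C₁} {δ : X ⟶ Y} (hδ : InRadical δ) (r : C₁ ⥤ C₂) [r.Additive]
    (hfull : ∀ u : r.obj Y ⟶ r.obj X, ∃ v : Y ⟶ X, r.map v = u) : InRadical (r.map δ) := by
  intro u
  obtain ⟨v, rfl⟩ := hfull u
  have := hδ v
  rw [← r.map_comp, ← r.map_id, ← r.map_sub]
  infer_instance

end Radical

lemma distTriang_of_iso₂ {C : Type*} [Category C] [Preadditive C] [HasZeroObject C]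
    [HasShift C ℤ] [∀ n : ℤ, (shiftFunctor C n).Additive] [Pretriangulated C]
    {T : Triangle C} (hT : T ∈ distTriang C) {M : C} (e : T.obj₂ ≅ M) :
    Triangle.mk (T.mor₁ ≫ e.hom) (e.inv ≫ T.mor₂) T.mor₃ ∈ distTriang C :=
  isomorphic_distinguished _ hT _ <|
    Triangle.isoMk _ _ (Iso.refl _) e.symm (Iso.refl _) (by simp [Triangle.mk]) (by simp [Triangle.mk]) (by simp [Triangle.mk])

lemma exists_map_eq_of_shift {C₁ C₂ : Type*} [Category C₁] [Category C₂]
    [HasShift C₁ ℤ] [HasShift C₂ ℤ] (r : C₁ ⥤ C₂) [r.CommShift ℤ] (k : ℤ) {X Y : C₁}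
    (h : ∀ g' : r.obj (X⟦k⟧) ⟶ r.obj (Y⟦k⟧), ∃ f' : X⟦k⟧ ⟶ Y⟦k⟧, r.map f' = g')
    (g : r.obj X ⟶ r.obj Y) : ∃ f : X ⟶ Y, r.map f = g := by
  obtain ⟨f', hf'⟩ := h ((r.commShiftIso k).hom.app X ≫ g⟦k⟧' ≫ (r.commShiftIso k).inv.app Y)
  obtain ⟨f, rfl⟩ := (shiftFunctor C₁ k).map_surjective f'
  refine ⟨f, (shiftFunctor C₂ k).map_injective ?_⟩
  rw [← cancel_epi ((r.commShiftIso k).hom.app X), ← r.commShiftIso_hom_naturality, hf']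
  simp

namespace WeightStructure

variable {C} (w : WeightStructure C)

lemma mem_leN_of_retract {X Y : C} {n : ℤ} (h : Retract X Y) (hY : Y ∈ w.leN n) :
    X ∈ w.leN n :=
  w.le_retract _ _ (h.map (shiftFunctor C (-n))).retract hY

lemma mem_geN_of_retract {X Y : C} {n : ℤ} (h : Retract X Y) (hY : Y ∈ w.geN n) :
    X ∈ w.geN n :=
  w.ge_retract _ _ (h.map (shiftFunctor C (-n))).retract hY

lemma shift_mem_leN {X : C} {m : ℤ} (k : ℤ) {n : ℤ} (h : m + k = n) (hX : X ∈ w.leN m) :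
    X⟦k⟧ ∈ w.leN n :=
  w.le_retract _ _ (Retract.ofIso ((shiftFunctorAdd' C k (-n) (-m) (by omega)).app X).symm).retract hX

lemma shift_mem_geN {X : C} {m : ℤ} (k : ℤ) {n : ℤ} (h : m + k = n) (hX : X ∈ w.geN m) :
    X⟦k⟧ ∈ w.geN n :=
  w.ge_retract _ _ (Retract.ofIso ((shiftFunctorAdd' C k (-n) (-m) (by omega)).app X).symm).retract hX

lemma hom_eq_zero_of_mem_leN_of_mem_geN {X Y : C} {m n : ℤ} (hX : X ∈ w.leN m)
    (hY : Y ∈ w.geN n) (h : m + 1 = n) (f : X ⟶ Y) : f = 0 :=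
  (shiftFunctor C (-m)).map_eq_zero_iff.mp <|
    w.orthogonal hX (w.shift_mem_geN (-m) (by omega) hY) _

lemma exists_isWeightFiltrationAt (n : ℤ) (M : C) :
    ∃ (A B : C) (f : A ⟶ M) (g : M ⟶ B) (δ : B ⟶ A⟦(1 : ℤ)⟧), IsWeightFiltrationAt w n f g δ := by
  obtain ⟨A, B, f, g, δ, hT, hA, hB⟩ := w.exists_decomp (M⟦-(n - 1)⟧)
  have hT' := distTriang_of_iso₂ (Triangle.shift_distinguished _ hT (n - 1))
    ((shiftFunctorCompIsoId C (-(n - 1)) (n - 1) (by omega)).app M)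
  refine ⟨_, _, _, _, _, hT', ?_, w.shift_mem_geN (n - 1) (by omega) hB⟩
  exact w.le_retract _ _
    (Retract.ofIso ((shiftFunctorCompIsoId C (n - 1) (-(n - 1)) (by omega)).app A)).retract hA

lemma mem_leN_obj₂ {T : Triangle C} (hT : T ∈ distTriang C) {n : ℤ}
    (h₁ : T.obj₁ ∈ w.leN n) (h₃ : T.obj₃ ∈ w.leN n) : T.obj₂ ∈ w.leN n := by
  obtain ⟨A, B, a, b, c, hD, hA, hB⟩ := w.exists_isWeightFiltrationAt (n + 1) T.obj₂
  have hb : b = 0 := by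
    obtain ⟨u, rfl⟩ := Triangle.yoneda_exact₂ T hT b (w.hom_eq_zero_of_mem_leN_of_mem_geN h₁ hB rfl _)
    rw [w.hom_eq_zero_of_mem_leN_of_mem_geN h₃ hB rfl u, comp_zero]
  obtain ⟨s, hs⟩ := Triangle.coyoneda_exact₂ _ hD (𝟙 T.obj₂) (show 𝟙 T.obj₂ ≫ b = 0 by rw [hb, comp_zero])
  exact w.mem_leN_of_retract ⟨s, a, hs.symm⟩ (by simpa using hA)

lemma mem_geN_obj₂ {T : Triangle C} (hT : T ∈ distTriang C) {n : ℤ}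
    (h₁ : T.obj₁ ∈ w.geN n) (h₃ : T.obj₃ ∈ w.geN n) : T.obj₂ ∈ w.geN n := by
  obtain ⟨A, B, a, b, c, hD, hA, hB⟩ := w.exists_isWeightFiltrationAt n T.obj₂
  have ha : a = 0 := by
    obtain ⟨u, rfl⟩ := Triangle.coyoneda_exact₂ T hT a
      (w.hom_eq_zero_of_mem_leN_of_mem_geN hA h₃ (by omega) _)
    rw [w.hom_eq_zero_of_mem_leN_of_mem_geN hA h₁ (by omega) u, zero_comp]
  obtain ⟨t, ht⟩ := Triangle.yoneda_exact₂ _ hD (𝟙 T.obj₂) (show a ≫ 𝟙 T.obj₂ = 0 by rw [ha, zero_comp])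
  exact w.mem_geN_of_retract ⟨b, t, ht.symm⟩ hB

lemma exists_distTriang_of_mem_leN {X : C} {n : ℤ} (hX : X ∈ w.leN n) :
    ∃ (L X₀ : C) (a : L ⟶ X) (π : X ⟶ X₀) (c : X₀ ⟶ L⟦(1 : ℤ)⟧),
      Triangle.mk a π c ∈ distTriang C ∧ L ∈ w.leN (n - 1) ∧ X₀ ∈ w.leN n ∧ X₀ ∈ w.geN n := by
  obtain ⟨L, X₀, a, π, c, hD, hL, hX₀⟩ := w.exists_isWeightFiltrationAt n X
  exact ⟨L, X₀, a, π, c, hD, hL,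
    w.mem_leN_obj₂ (rot_of_distTriang _ hD) hX (w.shift_mem_leN 1 (by omega) hL), hX₀⟩

lemma exists_distTriang_of_mem_geN {Y : C} {n : ℤ} (hY : Y ∈ w.geN n) :
    ∃ (Y₀ G : C) (ι : Y₀ ⟶ Y) (q : Y ⟶ G) (c : G ⟶ Y₀⟦(1 : ℤ)⟧),
      Triangle.mk ι q c ∈ distTriang C ∧ Y₀ ∈ w.leN n ∧ Y₀ ∈ w.geN n ∧ G ∈ w.geN (n + 1) := by
  obtain ⟨Y₀, G, ι, q, c, hD, hY₀, hG⟩ := w.exists_isWeightFiltrationAt (n + 1) Y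
  exact ⟨Y₀, G, ι, q, c, hD, by simpa using hY₀,
    w.mem_geN_obj₂ (inv_rot_of_distTriang _ hD) (w.shift_mem_geN (-1) (by omega) hG) hY, hG⟩

end WeightStructure

namespace WeightExact

variable {C₁ : Type*} [Category C₁] [Preadditive C₁] [HasZeroObject C₁] [HasShift C₁ ℤ]
  [∀ n : ℤ, (shiftFunctor C₁ n).Additive] [Pretriangulated C₁]
  {C₂ : Type*} [Category C₂] [Preadditive C₂] [HasZeroObject C₂] [HasShift C₂ ℤ]
  [∀ n : ℤ, (shiftFunctor C₂ n).Additive] [Pretriangulated C₂]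
  {w₁ : WeightStructure C₁} {w₂ : WeightStructure C₂} {r : C₁ ⥤ C₂} [r.CommShift ℤ]

lemma map_mem_leN (hwe : WeightExact w₁ w₂ r) {X : C₁} {n : ℤ} (hX : X ∈ w₁.leN n) :
    r.obj X ∈ w₂.leN n :=
  w₂.le_retract _ _ (Retract.ofIso ((r.commShiftIso (-n)).app X).symm).retract (hwe.1 _ hX)

lemma map_mem_geN (hwe : WeightExact w₁ w₂ r) {X : C₁} {n : ℤ} (hX : X ∈ w₁.geN n) :
    r.obj X ∈ w₂.geN n :=
  w₂.ge_retract _ _ (Retract.ofIso ((r.commShiftIso (-n)).app X).symm).retract (hwe.2 _ hX)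

variable [r.IsTriangulated]

lemma fullOn_leN_zero_geN_zero (hwe : WeightExact w₁ w₂ r) (hfull : FullOn r w₁.heart w₁.heart) :
    FullOn r (w₁.leN 0) (w₁.geN 0) := by
  intro X Y hX hY g
  obtain ⟨L, X₀, a, π, c, hDX, hL, hX₀⟩ := w₁.exists_distTriang_of_mem_leN hX
  obtain ⟨Y₀, G, ι, q, c', hDY, hY₀le, hY₀ge, hG⟩ := w₁.exists_distTriang_of_mem_geN hY
  obtain ⟨g₁, hg₁⟩ : ∃ g₁, g = r.map π ≫ g₁ :=
    Triangle.yoneda_exact₂ _ (r.map_distinguished _ hDX) g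
      (w₂.hom_eq_zero_of_mem_leN_of_mem_geN (hwe.map_mem_leN hL) (hwe.map_mem_geN hY) rfl _)
  obtain ⟨g₂, hg₂⟩ : ∃ g₂, g₁ = g₂ ≫ r.map ι :=
    Triangle.coyoneda_exact₂ _ (r.map_distinguished _ hDY) g₁
      (w₂.hom_eq_zero_of_mem_leN_of_mem_geN (hwe.map_mem_leN hX₀.1) (hwe.map_mem_geN hG) rfl _)
  obtain ⟨h, hh⟩ := hfull X₀ Y₀ hX₀ ⟨hY₀le, hY₀ge⟩ g₂
  exact ⟨π ≫ h ≫ ι, by rw [hg₁, hg₂, r.map_comp, r.map_comp, hh]⟩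

lemma fullOn_leN_geN (hwe : WeightExact w₁ w₂ r) (hfull : FullOn r w₁.heart w₁.heart) (n : ℤ) :
    FullOn r (w₁.leN n) (w₁.geN n) := fun X Y hX hY =>
  exists_map_eq_of_shift r (-n) <| hwe.fullOn_leN_zero_geN_zero hfull _ _
    (w₁.shift_mem_leN (-n) (by omega) hX) (w₁.shift_mem_geN (-n) (by omega) hY)

end WeightExact

theorem statement1
    (F : Type*) [Field F] [CharZero F]
    {C₁ : Type*} [Category C₁] [Preadditive C₁] [HasZeroObject C₁] [HasShift C₁ ℤ]
    [∀ n : ℤ, (CategoryTheory.shiftFunctor C₁ n).Additive] [Pretriangulated C₁] [CategoryTheory.Linear F C₁]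
    {C₂ : Type*} [Category C₂] [Preadditive C₂] [HasZeroObject C₂] [HasShift C₂ ℤ]
    [∀ n : ℤ, (CategoryTheory.shiftFunctor C₂ n).Additive] [Pretriangulated C₂] [CategoryTheory.Linear F C₂]
    (w₁ : WeightStructure C₁) (w₂ : WeightStructure C₂)
    (r : C₁ ⥤ C₂) [r.Additive] [Functor.Linear F r] [r.CommShift ℤ] [r.IsTriangulated]
    (hwe : WeightExact w₁ w₂ r)
    (hfull : ∀ X Y : C₁, X ∈ w₁.heart → Y ∈ w₁.heart →
      ∀ g : r.obj X ⟶ r.obj Y, ∃ f : X ⟶ Y, r.map f = g)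
    (n : ℤ) {A M B : C₁} (f : A ⟶ M) (g : M ⟶ B) (δ : B ⟶ A⟦(1 : ℤ)⟧)
    (hmin : IsMinimalWeightFiltrationAt w₁ n f g δ) :
    IsMinimalWeightFiltrationAt w₂ n (r.map f) (r.map g)
      (r.map δ ≫ (r.commShiftIso (1 : ℤ)).hom.app A) := by
  obtain ⟨⟨hT, hA, hB⟩, hδ⟩ := hmin
  have hA₁ : A⟦(1 : ℤ)⟧ ∈ w₁.leN n := w₁.shift_mem_leN 1 (by omega) hA
  refine ⟨⟨r.map_distinguished _ hT, hwe.map_mem_leN hA, hwe.map_mem_geN hB⟩, ?_⟩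
  exact (hδ.map r (hwe.fullOn_leN_geN hfull n _ _ hA₁ hB)).comp_isIso _

end Paper
end
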